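/- Let (𝔤, 𝔥) be a matched pair of finite-dimensional real Lie algebras. For a smooth function F : 𝔤* × 𝔥* → ℝ define its partial gradients δF/δμ(μ, ν) ∈ 𝔤 and δF/δν(μ, ν) ∈ 𝔥 by requiring that the Fréchet derivative of F at (μ, ν) applied to (α, β) ∈ 𝔤* × 𝔥* equals α(δF/δμ) + β(δF/δν). Then the matched Lie-Poisson bracket {F, G}(μ, ν) := ⟨μ, [δF/δμ, δG/δμ]⟩ + ⟨ν, [δF/δν, δG/δν]⟩ + ⟨μ, (δF/δν) ▷ (δG/δμ)⟩ − ⟨μ, (δG/δν) ▷ (δF/δμ)⟩ + ⟨ν, (δF/δν) ◁ (δG/δμ)⟩ − ⟨ν, (δG/δν) ◁ (δF/δμ)⟩ is a Poisson bracket on smooth functions on 𝔤* × 𝔥*: it is ℝ-bilinear, antisymmetric, and satisfies the Jacobi identity {{F, G}, E} + {{G, E}, F} + {{E, F}, G} = 0 for all smooth F, G, E. -/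

import Mathlib

/-!
Pairing `(ξ, η) ∈ 𝔤 × 𝔥` with `(μ, ν) ∈ 𝔤* × 𝔥*` by `μ ξ + ν η` is a perfect pairing, through
which the matched Lie-Poisson bracket becomes the Lie-Poisson bracket `{F, G}(p) = ⟨[∇F, ∇G], p⟩`
of the Lie algebra `𝔤 ⋈ 𝔥`; the matched-pair axioms are exactly what makes the bracket of
`𝔤 ⋈ 𝔥` satisfy the Jacobi identity. For a Lie-Poisson bracket, bilinearity and antisymmetry are
immediate. Differentiating `{F, G}` by the product rule gives
`{{F, G}, H}(p) = ⟨[[∇F, ∇G], ∇H], p⟩ + D²F(p)(c_H, c_G) - D²G(p)(c_H, c_F)` with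
`c_X = ad*_{∇X} p`. In the cyclic sum the second-derivative terms cancel by symmetry of second
derivatives, and the remaining terms vanish by the Jacobi identity of the Lie algebra.
-/

/-- The matched Lie-Poisson bracket of two functions on `𝔤* × 𝔥*`:
`{F, G}(μ, ν) = ⟨μ, [δF/δμ, δG/δμ]⟩ + ⟨ν, [δF/δν, δG/δν]⟩
  + ⟨μ, (δF/δν) ▷ (δG/δμ)⟩ − ⟨μ, (δG/δν) ▷ (δF/δμ)⟩
  + ⟨ν, (δF/δν) ◁ (δG/δμ)⟩ − ⟨ν, (δG/δν) ◁ (δF/δμ)⟩`,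
where `Dg F`, `Dh F` denote the partial gradients `δF/δμ`, `δF/δν`. -/
def matchedLiePoisson {𝔤 𝔥 : Type*}
    [NormedAddCommGroup 𝔤] [NormedSpace ℝ 𝔤] [NormedAddCommGroup 𝔥] [NormedSpace ℝ 𝔥]
    (brg : 𝔤 →ₗ[ℝ] 𝔤 →ₗ[ℝ] 𝔤) (brh : 𝔥 →ₗ[ℝ] 𝔥 →ₗ[ℝ] 𝔥)
    (lact : 𝔥 →ₗ[ℝ] 𝔤 →ₗ[ℝ] 𝔤) (ract : 𝔥 →ₗ[ℝ] 𝔤 →ₗ[ℝ] 𝔥)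
    (Dg : ((𝔤 →L[ℝ] ℝ) × (𝔥 →L[ℝ] ℝ) → ℝ) → (𝔤 →L[ℝ] ℝ) × (𝔥 →L[ℝ] ℝ) → 𝔤)
    (Dh : ((𝔤 →L[ℝ] ℝ) × (𝔥 →L[ℝ] ℝ) → ℝ) → (𝔤 →L[ℝ] ℝ) × (𝔥 →L[ℝ] ℝ) → 𝔥)
    (F G : (𝔤 →L[ℝ] ℝ) × (𝔥 →L[ℝ] ℝ) → ℝ)
    (p : (𝔤 →L[ℝ] ℝ) × (𝔥 →L[ℝ] ℝ)) : ℝ :=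
  p.1 (brg (Dg F p) (Dg G p)) + p.2 (brh (Dh F p) (Dh G p))
    + p.1 (lact (Dh F p) (Dg G p)) - p.1 (lact (Dh G p) (Dg F p))
    + p.2 (ract (Dh F p) (Dg G p)) - p.2 (ract (Dh G p) (Dg F p))

lemma fderiv_linear_combination {E : Type*} [NormedAddCommGroup E] [NormedSpace ℝ E]
    {F G : E → ℝ} {p : E} (hF : DifferentiableAt ℝ F p) (hG : DifferentiableAt ℝ G p) (a b : ℝ) :
    fderiv ℝ (fun q => a * F q + b * G q) p = a • fderiv ℝ F p + b • fderiv ℝ G p := by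
  rw [fderiv_fun_add (hF.const_mul a) (hG.const_mul b), fderiv_const_mul hF, fderiv_const_mul hG]

structure IsLieBracket {R M : Type*} [CommRing R] [AddCommGroup M] [Module R M]
    (B : M →ₗ[R] M →ₗ[R] M) : Prop where
  isAlt : B.IsAlt
  jacobi : ∀ x y z, B (B x y) z + B (B y z) x + B (B z x) y = 0

section LiePoisson

variable {L E : Type*} [AddCommGroup L] [Module ℝ L]
  [NormedAddCommGroup E] [NormedSpace ℝ E]
  (pair : L →ₗ[ℝ] E →ₗ[ℝ] ℝ) [pair.IsPerfPair] (B : L →ₗ[ℝ] L →ₗ[ℝ] L)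

noncomputable def lieGradient : (E →L[ℝ] ℝ) →ₗ[ℝ] L :=
  pair.toPerfPair.symm.toLinearMap ∘ₗ ContinuousLinearMap.coeLM ℝ

@[simp] lemma pair_lieGradient (φ : E →L[ℝ] ℝ) (q : E) : pair (lieGradient pair φ) q = φ q := by
  simp [lieGradient]

lemma lieGradient_eq_of_forall {φ : E →L[ℝ] ℝ} {v : L} (h : ∀ q, φ q = pair v q) :
    lieGradient pair φ = v :=
  pair.toPerfPair.symm_apply_eq.2 (LinearMap.ext h)

noncomputable def coadjoint (p : E) (w : L) : E :=
  pair.flip.toPerfPair.symm (pair.flip p ∘ₗ B w)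

@[simp] lemma pair_coadjoint (p : E) (w v : L) :
    pair v (coadjoint pair B p w) = pair (B w v) p := by
  simp [coadjoint]

lemma pair_eq_neg_pair_coadjoint (hB : B.IsAlt) (p : E) (v w : L) :
    pair (B v w) p = -pair v (coadjoint pair B p w) := by
  rw [pair_coadjoint, ← hB.neg, map_neg, LinearMap.neg_apply]

variable [FiniteDimensional ℝ E]

noncomputable def liePoissonForm : (E →L[ℝ] ℝ) →L[ℝ] (E →L[ℝ] ℝ) →L[ℝ] E →L[ℝ] ℝ :=
  ((B.compl₁₂ (lieGradient pair) (lieGradient pair)).compr₂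
    (LinearMap.toContinuousLinearMap.toLinearMap ∘ₗ pair)).toContinuousBilinearMap

@[simp] lemma liePoissonForm_apply (φ ψ : E →L[ℝ] ℝ) (q : E) :
    liePoissonForm pair B φ ψ q = pair (B (lieGradient pair φ) (lieGradient pair ψ)) q := rfl

noncomputable def liePoissonBracket (F G : E → ℝ) (p : E) : ℝ :=
  liePoissonForm pair B (fderiv ℝ F p) (fderiv ℝ G p) p

lemma liePoissonBracket_antisymm (hB : B.IsAlt) (F G : E → ℝ) (p : E) :
    liePoissonBracket pair B F G p = -liePoissonBracket pair B G F p := by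
  rw [liePoissonBracket, liePoissonBracket, liePoissonForm_apply, liePoissonForm_apply, ← hB.neg,
    map_neg, LinearMap.neg_apply]

lemma liePoissonBracket_linear_combination_left {F G : E → ℝ} {p : E}
    (hF : DifferentiableAt ℝ F p) (hG : DifferentiableAt ℝ G p) (a b : ℝ) (H : E → ℝ) :
    liePoissonBracket pair B (fun q => a * F q + b * G q) H p =
      a * liePoissonBracket pair B F H p + b * liePoissonBracket pair B G H p := by
  simp [liePoissonBracket, fderiv_linear_combination hF hG]

lemma liePoissonBracket_linear_combination_right {F G : E → ℝ} {p : E}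
    (hF : DifferentiableAt ℝ F p) (hG : DifferentiableAt ℝ G p) (a b : ℝ) (H : E → ℝ) :
    liePoissonBracket pair B H (fun q => a * F q + b * G q) p =
      a * liePoissonBracket pair B H F p + b * liePoissonBracket pair B H G p := by
  simp [liePoissonBracket, fderiv_linear_combination hF hG]

lemma contDiff_liePoissonBracket {m n : WithTop ℕ∞} (hmn : m + 1 ≤ n) {F G : E → ℝ}
    (hF : ContDiff ℝ n F) (hG : ContDiff ℝ n G) : ContDiff ℝ m (liePoissonBracket pair B F G) := by
  have := hF.fderiv_right hmn
  have := hG.fderiv_right hmn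
  unfold liePoissonBracket
  fun_prop

lemma fderiv_liePoissonBracket_apply {F G : E → ℝ} {p : E}
    (hF : DifferentiableAt ℝ (fderiv ℝ F) p) (hG : DifferentiableAt ℝ (fderiv ℝ G) p) (q : E) :
    fderiv ℝ (liePoissonBracket pair B F G) p q =
      liePoissonForm pair B (fderiv ℝ F p) (fderiv ℝ G p) q
        + liePoissonForm pair B (fderiv ℝ (fderiv ℝ F) p q) (fderiv ℝ G p) p
        + liePoissonForm pair B (fderiv ℝ F p) (fderiv ℝ (fderiv ℝ G) p q) p := by
  have hform : HasFDerivAt (liePoissonForm pair B) (liePoissonForm pair B) (fderiv ℝ F p) :=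
    ContinuousLinearMap.hasFDerivAt _
  -- `G` must be given: unification alone finds only the topology of `→L`, not the norm.
  have hF' := HasFDerivAt.comp (G := (E →L[ℝ] ℝ) →L[ℝ] E →L[ℝ] ℝ) p hform hF.hasFDerivAt
  have hFG := hF'.clm_apply hG.hasFDerivAt
  have h : HasFDerivAt (liePoissonBracket pair B F G) _ p := hFG.clm_apply (hasFDerivAt_id p)
  rw [h.fderiv]
  simp only [_root_.add_apply, Function.comp_apply, ContinuousLinearMap.comp_apply,
    ContinuousLinearMap.flip_apply, ContinuousLinearMap.coe_id', id_eq]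
  ring

lemma liePoissonBracket_liePoissonBracket (hB : B.IsAlt) {F G : E → ℝ} (H : E → ℝ) {p : E}
    (hF : DifferentiableAt ℝ (fderiv ℝ F) p) (hG : DifferentiableAt ℝ (fderiv ℝ G) p) :
    liePoissonBracket pair B (liePoissonBracket pair B F G) H p =
      pair (B (B (lieGradient pair (fderiv ℝ F p)) (lieGradient pair (fderiv ℝ G p)))
          (lieGradient pair (fderiv ℝ H p))) p
        + fderiv ℝ (fderiv ℝ F) p (coadjoint pair B p (lieGradient pair (fderiv ℝ H p)))
            (coadjoint pair B p (lieGradient pair (fderiv ℝ G p)))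
        - fderiv ℝ (fderiv ℝ G) p (coadjoint pair B p (lieGradient pair (fderiv ℝ H p)))
            (coadjoint pair B p (lieGradient pair (fderiv ℝ F p))) := by
  have hskew : ∀ v w, pair (B v w) p = -pair (B w v) p := fun v w => by
    rw [← hB.neg, map_neg, LinearMap.neg_apply]
  set X := fderiv ℝ (fderiv ℝ F) p (coadjoint pair B p (lieGradient pair (fderiv ℝ H p)))
  set Y := fderiv ℝ (fderiv ℝ G) p (coadjoint pair B p (lieGradient pair (fderiv ℝ H p)))
  rw [← pair_lieGradient pair X, ← pair_lieGradient pair Y, liePoissonBracket,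
    liePoissonForm_apply, pair_eq_neg_pair_coadjoint pair B hB, pair_lieGradient,
    fderiv_liePoissonBracket_apply pair B hF hG]
  simp only [liePoissonForm_apply, pair_coadjoint]
  linear_combination -hskew (lieGradient pair (fderiv ℝ H p))
      (B (lieGradient pair (fderiv ℝ F p)) (lieGradient pair (fderiv ℝ G p)))
    - hskew (lieGradient pair X) (lieGradient pair (fderiv ℝ G p))

theorem liePoissonBracket_jacobi (hB : IsLieBracket B) {F G H : E → ℝ}
    (hF : ContDiff ℝ 2 F) (hG : ContDiff ℝ 2 G) (hH : ContDiff ℝ 2 H) (p : E) :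
    liePoissonBracket pair B (liePoissonBracket pair B F G) H p
      + liePoissonBracket pair B (liePoissonBracket pair B G H) F p
      + liePoissonBracket pair B (liePoissonBracket pair B H F) G p = 0 := by
  have hd : ∀ {X : E → ℝ}, ContDiff ℝ 2 X → DifferentiableAt ℝ (fderiv ℝ X) p := fun hX =>
    (hX.fderiv_right (m := 1) le_rfl).differentiable one_ne_zero p
  have hsymm : ∀ {X : E → ℝ}, ContDiff ℝ 2 X → IsSymmSndFDerivAt ℝ X p := fun hX =>
    hX.contDiffAt.isSymmSndFDerivAt (by simp)
  rw [liePoissonBracket_liePoissonBracket pair B hB.isAlt H (hd hF) (hd hG),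
    liePoissonBracket_liePoissonBracket pair B hB.isAlt F (hd hG) (hd hH),
    liePoissonBracket_liePoissonBracket pair B hB.isAlt G (hd hH) (hd hF)]
  set gF := lieGradient pair (fderiv ℝ F p)
  set gG := lieGradient pair (fderiv ℝ G p)
  set gH := lieGradient pair (fderiv ℝ H p)
  have hcyc :
      pair (B (B gF gG) gH) p + pair (B (B gG gH) gF) p + pair (B (B gH gF) gG) p = 0 := by
    rw [← LinearMap.add_apply, ← map_add, ← LinearMap.add_apply, ← map_add, hB.jacobi]
    simp
  linarith [hsymm hF (coadjoint pair B p gH) (coadjoint pair B p gG),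
    hsymm hG (coadjoint pair B p gF) (coadjoint pair B p gH),
    hsymm hH (coadjoint pair B p gG) (coadjoint pair B p gF)]

end LiePoisson

section MatchedPair

variable {R 𝔤 𝔥 : Type*} [CommRing R] [AddCommGroup 𝔤] [Module R 𝔤] [AddCommGroup 𝔥] [Module R 𝔥]
  (brg : 𝔤 →ₗ[R] 𝔤 →ₗ[R] 𝔤) (brh : 𝔥 →ₗ[R] 𝔥 →ₗ[R] 𝔥)
  (lact : 𝔥 →ₗ[R] 𝔤 →ₗ[R] 𝔤) (ract : 𝔥 →ₗ[R] 𝔤 →ₗ[R] 𝔥)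

def matchedPairBracket : (𝔤 × 𝔥) →ₗ[R] (𝔤 × 𝔥) →ₗ[R] (𝔤 × 𝔥) :=
  LinearMap.mk₂ R
    (fun v w => (brg v.1 w.1 + lact v.2 w.1 - lact w.2 v.1,
                 brh v.2 w.2 + ract v.2 w.1 - ract w.2 v.1))
    (fun _ _ _ => by ext <;> simp <;> abel)
    (fun _ _ _ => by ext <;> simp [smul_sub])
    (fun _ _ _ => by ext <;> simp <;> abel)
    (fun _ _ _ => by ext <;> simp [smul_sub])

@[simp] lemma matchedPairBracket_apply (v w : 𝔤 × 𝔥) :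
    matchedPairBracket brg brh lact ract v w =
      (brg v.1 w.1 + lact v.2 w.1 - lact w.2 v.1,
       brh v.2 w.2 + ract v.2 w.1 - ract w.2 v.1) := rfl

lemma isLieBracket_matchedPairBracket (hg : IsLieBracket brg) (hh : IsLieBracket brh)
    (hlact : ∀ (η₁ η₂ : 𝔥) (ξ : 𝔤),
      lact (brh η₁ η₂) ξ = lact η₁ (lact η₂ ξ) - lact η₂ (lact η₁ ξ))
    (hract : ∀ (η : 𝔥) (ξ₁ ξ₂ : 𝔤),
      ract η (brg ξ₁ ξ₂) = ract (ract η ξ₁) ξ₂ - ract (ract η ξ₂) ξ₁)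
    (hcomp₁ : ∀ (η : 𝔥) (ξ₁ ξ₂ : 𝔤),
      lact η (brg ξ₁ ξ₂) = brg (lact η ξ₁) ξ₂ + brg ξ₁ (lact η ξ₂)
        + lact (ract η ξ₁) ξ₂ - lact (ract η ξ₂) ξ₁)
    (hcomp₂ : ∀ (η₁ η₂ : 𝔥) (ξ : 𝔤),
      ract (brh η₁ η₂) ξ = brh η₁ (ract η₂ ξ) + brh (ract η₁ ξ) η₂
        + ract η₁ (lact η₂ ξ) - ract η₂ (lact η₁ ξ)) :
    IsLieBracket (matchedPairBracket brg brh lact ract) where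
  isAlt v := by ext <;> simp [hg.isAlt.self_eq_zero, hh.isAlt.self_eq_zero]
  jacobi := by
    rintro ⟨ξ₁, η₁⟩ ⟨ξ₂, η₂⟩ ⟨ξ₃, η₃⟩
    ext
    · simp only [matchedPairBracket_apply, map_add, map_sub, LinearMap.add_apply,
        LinearMap.sub_apply, Prod.fst_add, Prod.fst_zero]
      rw [hlact η₁ η₂ ξ₃, hlact η₂ η₃ ξ₁, hlact η₃ η₁ ξ₂,
        hcomp₁ η₃ ξ₁ ξ₂, hcomp₁ η₁ ξ₂ ξ₃, hcomp₁ η₂ ξ₃ ξ₁, ← hg.isAlt.neg (lact η₃ ξ₂) ξ₁,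
        ← hg.isAlt.neg (lact η₁ ξ₃) ξ₂, ← hg.isAlt.neg (lact η₂ ξ₁) ξ₃,
        eq_sub_of_add_eq (eq_sub_of_add_eq (hg.jacobi ξ₁ ξ₂ ξ₃))]
      abel
    · simp only [matchedPairBracket_apply, map_add, map_sub, LinearMap.add_apply,
        LinearMap.sub_apply, Prod.snd_add, Prod.snd_zero]
      rw [hract η₃ ξ₁ ξ₂, hract η₁ ξ₂ ξ₃, hract η₂ ξ₃ ξ₁,
        hcomp₂ η₁ η₂ ξ₃, hcomp₂ η₂ η₃ ξ₁, hcomp₂ η₃ η₁ ξ₂, ← hh.isAlt.neg (ract η₁ ξ₂) η₃,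
        ← hh.isAlt.neg (ract η₂ ξ₃) η₁, ← hh.isAlt.neg (ract η₃ ξ₁) η₂,
        eq_sub_of_add_eq (eq_sub_of_add_eq (hh.jacobi η₁ η₂ η₃))]
      abel

end MatchedPair

section DualProdPairing

variable (𝔤 𝔥 : Type*) [NormedAddCommGroup 𝔤] [NormedSpace ℝ 𝔤]
  [NormedAddCommGroup 𝔥] [NormedSpace ℝ 𝔥]

def dualProdPairing : (𝔤 × 𝔥) →ₗ[ℝ] ((𝔤 →L[ℝ] ℝ) × (𝔥 →L[ℝ] ℝ)) →ₗ[ℝ] ℝ :=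
  LinearMap.mk₂ ℝ (fun v q => q.1 v.1 + q.2 v.2)
    (fun _ _ _ => by simp only [Prod.fst_add, Prod.snd_add, map_add]; ring)
    (fun _ _ _ => by simp only [Prod.smul_fst, Prod.smul_snd, map_smul, smul_eq_mul]; ring)
    (fun _ _ _ => by simp only [Prod.fst_add, Prod.snd_add, _root_.add_apply]; ring)
    (fun _ _ _ => by
      simp only [Prod.smul_fst, Prod.smul_snd, _root_.smul_apply, smul_eq_mul]; ring)

@[simp] lemma dualProdPairing_apply (v : 𝔤 × 𝔥) (q : (𝔤 →L[ℝ] ℝ) × (𝔥 →L[ℝ] ℝ)) :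
    dualProdPairing 𝔤 𝔥 v q = q.1 v.1 + q.2 v.2 := rfl

instance [FiniteDimensional ℝ 𝔤] [FiniteDimensional ℝ 𝔥] :
    (dualProdPairing 𝔤 𝔥).IsPerfPair := by
  refine .of_injective (injective_iff_map_eq_zero _ |>.2 fun v hv => ?_)
    (injective_iff_map_eq_zero _ |>.2 fun q hq => ?_)
  · have h := LinearMap.congr_fun hv
    ext
    · exact SeparatingDual.eq_zero_of_forall_dual_eq_zero fun f => by simpa using h (f, 0)
    · exact SeparatingDual.eq_zero_of_forall_dual_eq_zero fun f => by simpa using h (0, f)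
  · have h := LinearMap.congr_fun hq
    ext v
    · simpa using h (v, 0)
    · simpa using h (0, v)

end DualProdPairing

lemma matchedLiePoisson_eq_liePoissonBracket {𝔤 𝔥 : Type*}
    [NormedAddCommGroup 𝔤] [NormedSpace ℝ 𝔤] [NormedAddCommGroup 𝔥] [NormedSpace ℝ 𝔥]
    [FiniteDimensional ℝ 𝔤] [FiniteDimensional ℝ 𝔥]
    (brg : 𝔤 →ₗ[ℝ] 𝔤 →ₗ[ℝ] 𝔤) (brh : 𝔥 →ₗ[ℝ] 𝔥 →ₗ[ℝ] 𝔥)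
    (lact : 𝔥 →ₗ[ℝ] 𝔤 →ₗ[ℝ] 𝔤) (ract : 𝔥 →ₗ[ℝ] 𝔤 →ₗ[ℝ] 𝔥)
    {Dg : ((𝔤 →L[ℝ] ℝ) × (𝔥 →L[ℝ] ℝ) → ℝ) → (𝔤 →L[ℝ] ℝ) × (𝔥 →L[ℝ] ℝ) → 𝔤}
    {Dh : ((𝔤 →L[ℝ] ℝ) × (𝔥 →L[ℝ] ℝ) → ℝ) → (𝔤 →L[ℝ] ℝ) × (𝔥 →L[ℝ] ℝ) → 𝔥}
    {F G : (𝔤 →L[ℝ] ℝ) × (𝔥 →L[ℝ] ℝ) → ℝ}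
    (hF : ∀ p α β, fderiv ℝ F p (α, β) = α (Dg F p) + β (Dh F p))
    (hG : ∀ p α β, fderiv ℝ G p (α, β) = α (Dg G p) + β (Dh G p)) :
    matchedLiePoisson brg brh lact ract Dg Dh F G =
      liePoissonBracket (dualProdPairing 𝔤 𝔥) (matchedPairBracket brg brh lact ract) F G := by
  funext p
  have hgradF : lieGradient (dualProdPairing 𝔤 𝔥) (fderiv ℝ F p) = (Dg F p, Dh F p) :=
    lieGradient_eq_of_forall _ fun q => hF p q.1 q.2
  have hgradG : lieGradient (dualProdPairing 𝔤 𝔥) (fderiv ℝ G p) = (Dg G p, Dh G p) :=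
    lieGradient_eq_of_forall _ fun q => hG p q.1 q.2
  simp only [liePoissonBracket, liePoissonForm_apply, hgradF, hgradG, matchedLiePoisson,
    dualProdPairing_apply, matchedPairBracket_apply, map_add, map_sub]
  ring

/-- For a matched pair `(𝔤, 𝔥)` of finite-dimensional real Lie algebras, the matched
Lie-Poisson bracket is a Poisson bracket on smooth functions on `𝔤* × 𝔥*`: it is
`ℝ`-bilinear, antisymmetric, and satisfies the Jacobi identity.  Here the Lie algebra
structures of `𝔤` and `𝔥` are given by the bilinear brackets `brg`, `brh`, the mutual
actions by the bilinear maps `lact` (`▷`) and `ract` (`◁`), and `Dg F`, `Dh F` are the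
partial gradients `δF/δμ ∈ 𝔤`, `δF/δν ∈ 𝔥`, defined by requiring that the Fréchet
derivative of `F` at `(μ, ν)` applied to `(α, β)` equals `α(δF/δμ) + β(δF/δν)`. -/
theorem matchedLiePoisson_is_poisson_bracket {𝔤 𝔥 : Type*}
    [NormedAddCommGroup 𝔤] [NormedSpace ℝ 𝔤] [FiniteDimensional ℝ 𝔤]
    [NormedAddCommGroup 𝔥] [NormedSpace ℝ 𝔥] [FiniteDimensional ℝ 𝔥]
    (brg : 𝔤 →ₗ[ℝ] 𝔤 →ₗ[ℝ] 𝔤) (brh : 𝔥 →ₗ[ℝ] 𝔥 →ₗ[ℝ] 𝔥)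
    (lact : 𝔥 →ₗ[ℝ] 𝔤 →ₗ[ℝ] 𝔤) (ract : 𝔥 →ₗ[ℝ] 𝔤 →ₗ[ℝ] 𝔥)
    -- `𝔤` is a Lie algebra
    (hg_alt : ∀ ξ : 𝔤, brg ξ ξ = 0)
    (hg_jacobi : ∀ ξ₁ ξ₂ ξ₃ : 𝔤,
      brg (brg ξ₁ ξ₂) ξ₃ + brg (brg ξ₂ ξ₃) ξ₁ + brg (brg ξ₃ ξ₁) ξ₂ = 0)
    -- `𝔥` is a Lie algebra
    (hh_alt : ∀ η : 𝔥, brh η η = 0)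
    (hh_jacobi : ∀ η₁ η₂ η₃ : 𝔥,
      brh (brh η₁ η₂) η₃ + brh (brh η₂ η₃) η₁ + brh (brh η₃ η₁) η₂ = 0)
    -- `▷` is a left Lie algebra action of `𝔥` on `𝔤`
    (hlact : ∀ (η₁ η₂ : 𝔥) (ξ : 𝔤),
      lact (brh η₁ η₂) ξ = lact η₁ (lact η₂ ξ) - lact η₂ (lact η₁ ξ))
    -- `◁` is a right Lie algebra action of `𝔤` on `𝔥`
    (hract : ∀ (η : 𝔥) (ξ₁ ξ₂ : 𝔤),
      ract η (brg ξ₁ ξ₂) = ract (ract η ξ₁) ξ₂ - ract (ract η ξ₂) ξ₁)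
    -- compatibility conditions
    (hcomp₁ : ∀ (η : 𝔥) (ξ₁ ξ₂ : 𝔤),
      lact η (brg ξ₁ ξ₂) = brg (lact η ξ₁) ξ₂ + brg ξ₁ (lact η ξ₂)
        + lact (ract η ξ₁) ξ₂ - lact (ract η ξ₂) ξ₁)
    (hcomp₂ : ∀ (η₁ η₂ : 𝔥) (ξ : 𝔤),
      ract (brh η₁ η₂) ξ = brh η₁ (ract η₂ ξ) + brh (ract η₁ ξ) η₂
        + ract η₁ (lact η₂ ξ) - ract η₂ (lact η₁ ξ))
    -- the partial gradients, defined via the Fréchet derivative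
    (Dg : ((𝔤 →L[ℝ] ℝ) × (𝔥 →L[ℝ] ℝ) → ℝ) → (𝔤 →L[ℝ] ℝ) × (𝔥 →L[ℝ] ℝ) → 𝔤)
    (Dh : ((𝔤 →L[ℝ] ℝ) × (𝔥 →L[ℝ] ℝ) → ℝ) → (𝔤 →L[ℝ] ℝ) × (𝔥 →L[ℝ] ℝ) → 𝔥)
    (hgrad : ∀ F : (𝔤 →L[ℝ] ℝ) × (𝔥 →L[ℝ] ℝ) → ℝ, ContDiff ℝ (⊤ : ℕ∞) F →
      ∀ (p : (𝔤 →L[ℝ] ℝ) × (𝔥 →L[ℝ] ℝ)) (α : 𝔤 →L[ℝ] ℝ) (β : 𝔥 →L[ℝ] ℝ),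
        fderiv ℝ F p (α, β) = α (Dg F p) + β (Dh F p)) :
    -- `ℝ`-bilinearity
    (∀ (a b : ℝ) (F G E : (𝔤 →L[ℝ] ℝ) × (𝔥 →L[ℝ] ℝ) → ℝ),
      ContDiff ℝ (⊤ : ℕ∞) F → ContDiff ℝ (⊤ : ℕ∞) G → ContDiff ℝ (⊤ : ℕ∞) E →
      ∀ p, matchedLiePoisson brg brh lact ract Dg Dh (fun q => a * F q + b * G q) E p =
        a * matchedLiePoisson brg brh lact ract Dg Dh F E p
          + b * matchedLiePoisson brg brh lact ract Dg Dh G E p) ∧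
    (∀ (a b : ℝ) (F G E : (𝔤 →L[ℝ] ℝ) × (𝔥 →L[ℝ] ℝ) → ℝ),
      ContDiff ℝ (⊤ : ℕ∞) F → ContDiff ℝ (⊤ : ℕ∞) G → ContDiff ℝ (⊤ : ℕ∞) E →
      ∀ p, matchedLiePoisson brg brh lact ract Dg Dh E (fun q => a * F q + b * G q) p =
        a * matchedLiePoisson brg brh lact ract Dg Dh E F p
          + b * matchedLiePoisson brg brh lact ract Dg Dh E G p) ∧
    -- antisymmetry
    (∀ F G : (𝔤 →L[ℝ] ℝ) × (𝔥 →L[ℝ] ℝ) → ℝ,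
      ContDiff ℝ (⊤ : ℕ∞) F → ContDiff ℝ (⊤ : ℕ∞) G →
      ∀ p, matchedLiePoisson brg brh lact ract Dg Dh F G p =
        - matchedLiePoisson brg brh lact ract Dg Dh G F p) ∧
    -- the Jacobi identity
    (∀ F G E : (𝔤 →L[ℝ] ℝ) × (𝔥 →L[ℝ] ℝ) → ℝ,
      ContDiff ℝ (⊤ : ℕ∞) F → ContDiff ℝ (⊤ : ℕ∞) G → ContDiff ℝ (⊤ : ℕ∞) E →
      ∀ p, matchedLiePoisson brg brh lact ract Dg Dh
              (fun q => matchedLiePoisson brg brh lact ract Dg Dh F G q) E p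
        + matchedLiePoisson brg brh lact ract Dg Dh
              (fun q => matchedLiePoisson brg brh lact ract Dg Dh G E q) F p
        + matchedLiePoisson brg brh lact ract Dg Dh
              (fun q => matchedLiePoisson brg brh lact ract Dg Dh E F q) G p = 0) := by
  set pair := dualProdPairing 𝔤 𝔥
  set B := matchedPairBracket brg brh lact ract
  have hB : IsLieBracket B := isLieBracket_matchedPairBracket brg brh lact ract
    ⟨hg_alt, hg_jacobi⟩ ⟨hh_alt, hh_jacobi⟩ hlact hract hcomp₁ hcomp₂
  have hLP : ∀ {F G}, ContDiff ℝ (⊤ : ℕ∞) F → ContDiff ℝ (⊤ : ℕ∞) G →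
      matchedLiePoisson brg brh lact ract Dg Dh F G = liePoissonBracket pair B F G :=
    fun hF hG => matchedLiePoisson_eq_liePoissonBracket brg brh lact ract (hgrad _ hF) (hgrad _ hG)
  have hdiff : ∀ {F : (𝔤 →L[ℝ] ℝ) × (𝔥 →L[ℝ] ℝ) → ℝ}, ContDiff ℝ (⊤ : ℕ∞) F →
      ∀ p, DifferentiableAt ℝ F p := fun hF => hF.differentiable (by simp)
  refine ⟨fun a b F G H hF hG hH p => ?_, fun a b F G H hF hG hH p => ?_,
    fun F G hF hG p => ?_, fun F G H hF hG hH p => ?_⟩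
  · rw [hLP (by fun_prop) hH, hLP hF hH, hLP hG hH]
    exact liePoissonBracket_linear_combination_left pair B (hdiff hF p) (hdiff hG p) a b H
  · rw [hLP hH (by fun_prop), hLP hH hF, hLP hH hG]
    exact liePoissonBracket_linear_combination_right pair B (hdiff hF p) (hdiff hG p) a b H
  · rw [hLP hF hG, hLP hG hF]
    exact liePoissonBracket_antisymm pair B hB.isAlt F G p
  · have hsmooth : ∀ {X Y}, ContDiff ℝ (⊤ : ℕ∞) X → ContDiff ℝ (⊤ : ℕ∞) Y →
        ContDiff ℝ (⊤ : ℕ∞) (liePoissonBracket pair B X Y) :=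
      fun hX hY => contDiff_liePoissonBracket pair B (by norm_cast) hX hY
    simp only [hLP hF hG, hLP hG hH, hLP hH hF]
    rw [hLP (hsmooth hF hG) hH, hLP (hsmooth hG hH) hF, hLP (hsmooth hH hF) hG]
    exact liePoissonBracket_jacobi pair B hB (hF.of_le (by norm_cast))
      (hG.of_le (by norm_cast)) (hH.of_le (by norm_cast)) p
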